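/- Let K be an abstract simplicial complex on a linearly ordered vertex set, Y a simplicial set, and δ a nonsingular twisted structure on K with coefficients in Y. Then the graded collection {Y_n × S(K)_n} with the twisted faces d_i^δ and twisted degeneracies s_i^δ satisfies all simplicial identities: d_i^δ d_j^δ = d_j^δ d_{i+1}^δ for i ≥ j; s_j^δ s_i^δ = s_{i+1}^δ s_j^δ for i ≥ j; d_i^δ s_j^δ = s_{j−1}^δ d_i^δ for i < j; d_j^δ s_j^δ = id = d_{j+1}^δ s_j^δ; and d_i^δ s_j^δ = s_j^δ d_{i−1}^δ for i > j+1. In particular these data form a simplicial set Y ×_δ S(K). -/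

import Mathlib

open CategoryTheory Simplicial

universe u

/-- An abstract simplicial complex with vertices in a type `V`: a collection of nonempty
finite subsets of `V` closed under passage to nonempty subsets. -/
structure AbsSimplicialComplex (V : Type u) where
  faces : Set (Finset V)
  nonempty_of_mem : ∀ s ∈ faces, s.Nonempty
  down_closed : ∀ s ∈ faces, ∀ t ⊆ s, t.Nonempty → t ∈ faces

variable {V : Type u} [LinearOrder V]

/-- The `n`-simplices of the simplicial set `S(K)`: weakly increasing `(n+1)`-tuples of
vertices spanning a simplex of `K`. -/
def SSimplex (K : AbsSimplicialComplex V) (n : ℕ) : Type u :=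
  { v : Fin (n + 1) → V // Monotone v ∧ Finset.image v Finset.univ ∈ K.faces }

/-- The face `d_i` of `S(K)`, deleting the `i`-th vertex. -/
def SSimplex.face {K : AbsSimplicialComplex V} {n : ℕ} (i : Fin (n + 2))
    (v : SSimplex K (n + 1)) : SSimplex K n :=
  ⟨v.1 ∘ i.succAbove,
    v.2.1.comp (Fin.strictMono_succAbove i).monotone,
    K.down_closed _ v.2.2 _
      (by rw [← Finset.image_image]; exact Finset.image_subset_image (Finset.subset_univ _))
      (Finset.image_nonempty.mpr Finset.univ_nonempty)⟩

/-- The degeneracy `s_i` of `S(K)`, repeating the `i`-th vertex. -/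
def SSimplex.degen {K : AbsSimplicialComplex V} {n : ℕ} (i : Fin (n + 1))
    (v : SSimplex K n) : SSimplex K (n + 1) :=
  ⟨v.1 ∘ i.predAbove,
    v.2.1.comp (Fin.predAbove_right_monotone i),
    K.down_closed _ v.2.2 _
      (by rw [← Finset.image_image]; exact Finset.image_subset_image (Finset.subset_univ _))
      (Finset.image_nonempty.mpr Finset.univ_nonempty)⟩

/-- The twisted face map `d_i^δ(y, (v₀,…,v_{n+1})) = (δ_{v_i}(d_i y), (v₀,…,v̂_i,…))`. -/
def twistedFace {K : AbsSimplicialComplex V} (Y : SSet.{u})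
    (δ : V → (Y ≅ Y)) {n : ℕ} (i : Fin (n + 2)) :
    Y _⦋n + 1⦌ × SSimplex K (n + 1) → Y _⦋n⦌ × SSimplex K n :=
  fun p => ((δ (p.2.1 i)).hom.app (Opposite.op (SimplexCategory.mk n)) (Y.δ i p.1),
    p.2.face i)

/-- The twisted degeneracy map `s_i^δ(y, (v₀,…,v_n)) = (δ_{v_i}⁻¹(s_i y), (v₀,…,v_i,v_i,…))`. -/
def twistedDegeneracy {K : AbsSimplicialComplex V} (Y : SSet.{u})
    (δ : V → (Y ≅ Y)) {n : ℕ} (i : Fin (n + 1)) :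
    Y _⦋n⦌ × SSimplex K n → Y _⦋n + 1⦌ × SSimplex K (n + 1) :=
  fun p => ((δ (p.2.1 i)).inv.app (Opposite.op (SimplexCategory.mk (n + 1))) (Y.σ i p.1),
    p.2.degen i)

/-!
Each twisted operator is an operator of `Y × S(K)` followed by an automorphism `δ_v`, and by
naturality these automorphisms slide past the simplicial operators of `Y`. So both sides of an
identity apply the same composite operator of `Y × S(K)` (by the simplicial identities of `Y` and
of `S(K)`), followed by the same two twists `δ_v^{±1}`, `δ_w^{±1}` in opposite orders. Here `v, w`
are vertices of one simplex of `K`, so the twists commute. In `d_j s_j = id = d_{j+1} s_j` the two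
twists are `δ_v⁻¹` and `δ_v`, which cancel.
-/

namespace CategoryTheory

lemma Iso.inv_hom_comm {C : Type*} [Category C] {X : C} {e e' : X ≅ X}
    (h : e.hom ≫ e'.hom = e'.hom ≫ e.hom) : e.inv ≫ e'.hom = e'.hom ≫ e.inv := by
  rw [Iso.inv_comp_eq, ← Category.assoc, h, Category.assoc, Iso.hom_inv_id, Category.comp_id]

lemma Iso.inv_inv_comm {C : Type*} [Category C] {X : C} {e e' : X ≅ X}
    (h : e.hom ≫ e'.hom = e'.hom ≫ e.hom) : e.inv ≫ e'.inv = e'.inv ≫ e.inv :=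
  Iso.inv_hom_comm (e' := e'.symm) (Iso.inv_hom_comm h.symm).symm

lemma NatTrans.app_map_app_map_comm {C : Type*} [Category C] {F : C ⥤ Type*} {f g : F ⟶ F}
    (hfg : f ≫ g = g ≫ f) {W X X' Z : C} {a : X ⟶ Z} {b : W ⟶ X} {c : X' ⟶ Z} {d : W ⟶ X'}
    (h : b ≫ a = d ≫ c) (x : F.obj W) :
    g.app Z (F.map a (f.app X (F.map b x))) = f.app Z (F.map c (g.app X' (F.map d x))) := by
  rw [← NatTrans.naturality_apply, ← NatTrans.naturality_apply, ← Functor.map_comp_apply,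
    ← Functor.map_comp_apply, h, ← NatTrans.comp_app_apply, ← NatTrans.comp_app_apply, hfg]

lemma Iso.hom_app_map_inv_app_map {C : Type*} [Category C] {F : C ⥤ Type*} (e : F ≅ F)
    {X Z : C} {a : X ⟶ Z} {b : Z ⟶ X} (h : b ≫ a = 𝟙 Z) (x : F.obj Z) :
    e.hom.app Z (F.map a (e.inv.app X (F.map b x))) = x := by
  rw [← NatTrans.naturality_apply, ← Functor.map_comp_apply, h, Functor.map_id_apply,
    Iso.inv_hom_id_app_apply]

end CategoryTheory

variable {K : AbsSimplicialComplex V}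

namespace SSimplex

@[simp]
lemma face_apply {n : ℕ} (i : Fin (n + 2)) (v : SSimplex K (n + 1)) (k : Fin (n + 1)) :
    (v.face i).1 k = v.1 (i.succAbove k) := rfl

@[simp]
lemma degen_apply {n : ℕ} (i : Fin (n + 1)) (v : SSimplex K n) (k : Fin (n + 2)) :
    (v.degen i).1 k = v.1 (i.predAbove k) := rfl

lemma pair_mem_faces {n : ℕ} (v : SSimplex K n) (a b : Fin (n + 1)) :
    ({v.1 a, v.1 b} : Finset V) ∈ K.faces :=
  K.down_closed _ v.2.2 _
    (Finset.insert_subset (Finset.mem_image_of_mem _ (Finset.mem_univ a))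
      (Finset.singleton_subset_iff.2 (Finset.mem_image_of_mem _ (Finset.mem_univ b))))
    (Finset.insert_nonempty _ _)

lemma face_face {n : ℕ} {i j : Fin (n + 2)} (H : j ≤ i) (v : SSimplex K (n + 2)) :
    (v.face j.castSucc).face i = (v.face i.succ).face j :=
  Subtype.ext (congrArg (fun θ : ⦋n⦌ ⟶ ⦋n + 2⦌ => v.1 ∘ θ.toOrderHom)
    (SimplexCategory.δ_comp_δ H).symm)

lemma degen_degen {n : ℕ} {i j : Fin (n + 1)} (H : j ≤ i) (v : SSimplex K n) :
    (v.degen i).degen j.castSucc = (v.degen j).degen i.succ :=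
  Subtype.ext (congrArg (fun θ : ⦋n + 2⦌ ⟶ ⦋n⦌ => v.1 ∘ θ.toOrderHom)
    (SimplexCategory.σ_comp_σ H))

lemma face_degen_of_le {n : ℕ} {i : Fin (n + 2)} {j : Fin (n + 1)} (H : i ≤ j.castSucc)
    (v : SSimplex K (n + 1)) : (v.degen j.succ).face i.castSucc = (v.face i).degen j :=
  Subtype.ext (congrArg (fun θ : ⦋n + 1⦌ ⟶ ⦋n + 1⦌ => v.1 ∘ θ.toOrderHom)
    (SimplexCategory.δ_comp_σ_of_le H))

lemma face_castSucc_degen {n : ℕ} (j : Fin (n + 1)) (v : SSimplex K n) :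
    (v.degen j).face j.castSucc = v :=
  Subtype.ext (congrArg (fun θ : ⦋n⦌ ⟶ ⦋n⦌ => v.1 ∘ θ.toOrderHom) SimplexCategory.δ_comp_σ_self)

lemma face_succ_degen {n : ℕ} (j : Fin (n + 1)) (v : SSimplex K n) :
    (v.degen j).face j.succ = v :=
  Subtype.ext (congrArg (fun θ : ⦋n⦌ ⟶ ⦋n⦌ => v.1 ∘ θ.toOrderHom) SimplexCategory.δ_comp_σ_succ)

lemma face_degen_of_gt {n : ℕ} {i : Fin (n + 2)} {j : Fin (n + 1)} (H : j.castSucc < i)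
    (v : SSimplex K (n + 1)) : (v.degen j.castSucc).face i.succ = (v.face i).degen j :=
  Subtype.ext (congrArg (fun θ : ⦋n + 1⦌ ⟶ ⦋n + 1⦌ => v.1 ∘ θ.toOrderHom)
    (SimplexCategory.δ_comp_σ_of_gt H))

end SSimplex

def IsTwistedStructure (K : AbsSimplicialComplex V) {Y : SSet.{u}} (δ : V → (Y ≅ Y)) : Prop :=
  ∀ v w : V, ({v, w} : Finset V) ∈ K.faces → (δ v).hom ≫ (δ w).hom = (δ w).hom ≫ (δ v).hom

lemma IsTwistedStructure.hom_comm {Y : SSet.{u}} {δ : V → (Y ≅ Y)} (hδ : IsTwistedStructure K δ)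
    {n : ℕ} (v : SSimplex K n) (a b : Fin (n + 1)) :
    (δ (v.1 a)).hom ≫ (δ (v.1 b)).hom = (δ (v.1 b)).hom ≫ (δ (v.1 a)).hom :=
  hδ _ _ (v.pair_mem_faces a b)

section TwistedIdentities

variable {Y : SSet.{u}} {δ : V → (Y ≅ Y)}

open SimplexCategory

theorem twistedFace_comp_twistedFace (hδ : IsTwistedStructure K δ) {n : ℕ} {i j : Fin (n + 2)}
    (H : j ≤ i) :
    twistedFace (K := K) Y δ i ∘ twistedFace Y δ j.castSucc =
      twistedFace Y δ j ∘ twistedFace Y δ i.succ := by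
  funext ⟨y, v⟩
  refine Prod.ext ?_ (v.face_face H)
  dsimp only [twistedFace, Function.comp_apply, SSimplex.face_apply]
  rw [Fin.succAbove_of_le_castSucc _ _ (Fin.castSucc_le_castSucc_iff.mpr H),
    Fin.succAbove_of_castSucc_lt _ _ (Fin.castSucc_lt_succ_iff.mpr H)]
  exact NatTrans.app_map_app_map_comm (hδ.hom_comm v _ _)
    (by rw [← op_comp, ← op_comp, δ_comp_δ H]) y

theorem twistedDegeneracy_comp_twistedDegeneracy (hδ : IsTwistedStructure K δ) {n : ℕ}
    {i j : Fin (n + 1)} (H : j ≤ i) :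
    twistedDegeneracy (K := K) Y δ j.castSucc ∘ twistedDegeneracy Y δ i =
      twistedDegeneracy Y δ i.succ ∘ twistedDegeneracy Y δ j := by
  funext ⟨y, v⟩
  refine Prod.ext ?_ (v.degen_degen H)
  dsimp only [twistedDegeneracy, Function.comp_apply, SSimplex.degen_apply]
  rw [Fin.predAbove_of_le_castSucc _ _ (Fin.castSucc_le_castSucc_iff.mpr H),
    Fin.castPred_castSucc, Fin.predAbove_of_castSucc_lt _ _ (Fin.castSucc_lt_succ_iff.mpr H),
    Fin.pred_succ]
  exact NatTrans.app_map_app_map_comm (Iso.inv_inv_comm (hδ.hom_comm v _ _))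
    (by rw [← op_comp, ← op_comp, σ_comp_σ H]) y

theorem twistedFace_comp_twistedDegeneracy_of_le (hδ : IsTwistedStructure K δ) {n : ℕ}
    {i : Fin (n + 2)} {j : Fin (n + 1)} (H : i ≤ j.castSucc) :
    twistedFace (K := K) Y δ i.castSucc ∘ twistedDegeneracy Y δ j.succ =
      twistedDegeneracy Y δ j ∘ twistedFace Y δ i := by
  funext ⟨y, v⟩
  refine Prod.ext ?_ (v.face_degen_of_le H)
  dsimp only [twistedFace, twistedDegeneracy, Function.comp_apply, SSimplex.face_apply,
    SSimplex.degen_apply]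
  rw [Fin.predAbove_of_le_castSucc _ _
      (Fin.castSucc_le_castSucc_iff.mpr (H.trans (Fin.castSucc_le_succ j))),
    Fin.castPred_castSucc, Fin.succAbove_of_le_castSucc _ _ H]
  exact NatTrans.app_map_app_map_comm (Iso.inv_hom_comm (hδ.hom_comm v _ _))
    (by rw [← op_comp, ← op_comp, δ_comp_σ_of_le H]) y

theorem twistedFace_castSucc_comp_twistedDegeneracy {n : ℕ} (j : Fin (n + 1)) :
    twistedFace (K := K) Y δ j.castSucc ∘ twistedDegeneracy Y δ j = id := by
  funext ⟨y, v⟩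
  refine Prod.ext ?_ (v.face_castSucc_degen j)
  dsimp only [twistedFace, twistedDegeneracy, Function.comp_apply, SSimplex.degen_apply]
  rw [Fin.predAbove_of_le_castSucc _ _ le_rfl, Fin.castPred_castSucc]
  exact Iso.hom_app_map_inv_app_map _ (by rw [← op_comp, δ_comp_σ_self, op_id]) y

theorem twistedFace_succ_comp_twistedDegeneracy {n : ℕ} (j : Fin (n + 1)) :
    twistedFace (K := K) Y δ j.succ ∘ twistedDegeneracy Y δ j = id := by
  funext ⟨y, v⟩
  refine Prod.ext ?_ (v.face_succ_degen j)
  dsimp only [twistedFace, twistedDegeneracy, Function.comp_apply, SSimplex.degen_apply]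
  rw [Fin.predAbove_of_castSucc_lt _ _ (Fin.castSucc_lt_succ (i := j)), Fin.pred_succ]
  exact Iso.hom_app_map_inv_app_map _ (by rw [← op_comp, δ_comp_σ_succ, op_id]) y

theorem twistedFace_comp_twistedDegeneracy_of_gt (hδ : IsTwistedStructure K δ) {n : ℕ}
    {i : Fin (n + 2)} {j : Fin (n + 1)} (H : j.castSucc < i) :
    twistedFace (K := K) Y δ i.succ ∘ twistedDegeneracy Y δ j.castSucc =
      twistedDegeneracy Y δ j ∘ twistedFace Y δ i := by
  funext ⟨y, v⟩
  refine Prod.ext ?_ (v.face_degen_of_gt H)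
  dsimp only [twistedFace, twistedDegeneracy, Function.comp_apply, SSimplex.face_apply,
    SSimplex.degen_apply]
  rw [Fin.predAbove_of_castSucc_lt _ _ (Fin.castSucc_lt_succ_iff.mpr H.le), Fin.pred_succ,
    Fin.succAbove_of_castSucc_lt _ _ H]
  exact NatTrans.app_map_app_map_comm (Iso.inv_hom_comm (hδ.hom_comm v _ _))
    (by rw [← op_comp, ← op_comp, δ_comp_σ_of_gt H]) y

end TwistedIdentities

/-- for a nonsingular twisted structure `δ` on an abstract simplicial complex `K`
(on a linearly ordered vertex set) with coefficients in a simplicial set `Y`, the graded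
collection `{Y_n × S(K)_n}` with the twisted faces `d_i^δ` and twisted degeneracies `s_i^δ`
satisfies all the simplicial identities, and hence forms a simplicial set `Y ×_δ S(K)`. -/
theorem twisted_simplicial_identities {K : AbsSimplicialComplex V} (Y : SSet.{u})
    (δ : V → (Y ≅ Y))
    (hcomm : ∀ v w : V, ({v, w} : Finset V) ∈ K.faces →
      (δ v).hom ≫ (δ w).hom = (δ w).hom ≫ (δ v).hom) :
    -- (1) `d_i^δ ∘ d_j^δ = d_j^δ ∘ d_{i+1}^δ` for `i ≥ j`
    (∀ (n : ℕ) (i j : Fin (n + 2)), j ≤ i →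
      (twistedFace (K := K) Y δ i) ∘ (twistedFace Y δ j.castSucc) =
        (twistedFace Y δ j) ∘ (twistedFace Y δ i.succ)) ∧
    -- (2) `s_j^δ ∘ s_i^δ = s_{i+1}^δ ∘ s_j^δ` for `i ≥ j`
    (∀ (n : ℕ) (i j : Fin (n + 1)), j ≤ i →
      (twistedDegeneracy (K := K) Y δ j.castSucc) ∘ (twistedDegeneracy Y δ i) =
        (twistedDegeneracy Y δ i.succ) ∘ (twistedDegeneracy Y δ j)) ∧
    -- (3) `d_i^δ ∘ s_j^δ = s_{j-1}^δ ∘ d_i^δ` for `i < j`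
    (∀ (n : ℕ) (i : Fin (n + 2)) (j : Fin (n + 1)), i ≤ j.castSucc →
      (twistedFace (K := K) Y δ i.castSucc) ∘ (twistedDegeneracy Y δ j.succ) =
        (twistedDegeneracy Y δ j) ∘ (twistedFace Y δ i)) ∧
    -- (4) `d_j^δ ∘ s_j^δ = id = d_{j+1}^δ ∘ s_j^δ`
    (∀ (n : ℕ) (j : Fin (n + 1)),
      (twistedFace (K := K) Y δ j.castSucc) ∘ (twistedDegeneracy Y δ j) = id ∧
      (twistedFace (K := K) Y δ j.succ) ∘ (twistedDegeneracy Y δ j) = id) ∧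
    -- (5) `d_i^δ ∘ s_j^δ = s_j^δ ∘ d_{i-1}^δ` for `i > j + 1`
    (∀ (n : ℕ) (i : Fin (n + 2)) (j : Fin (n + 1)), j.castSucc < i →
      (twistedFace (K := K) Y δ i.succ) ∘ (twistedDegeneracy Y δ j.castSucc) =
        (twistedDegeneracy Y δ j) ∘ (twistedFace Y δ i)) :=
  ⟨fun _ _ _ => twistedFace_comp_twistedFace hcomm,
    fun _ _ _ => twistedDegeneracy_comp_twistedDegeneracy hcomm,
    fun _ _ _ => twistedFace_comp_twistedDegeneracy_of_le hcomm,
    fun _ j => ⟨twistedFace_castSucc_comp_twistedDegeneracy j,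
      twistedFace_succ_comp_twistedDegeneracy j⟩,
    fun _ _ _ => twistedFace_comp_twistedDegeneracy_of_gt hcomm⟩
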